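/- Let A, B, C, D be bounded operators on H, let p ≥ 1 be a real exponent, let t ∈ [0,1], and let S : [0,∞) × [0,∞) → [0,∞) be monotone increasing in each argument with S(a,b) ≤ t·a + (1−t)·b for all a, b ≥ 0. Let T be the bounded operator on H ⊕ H defined by T(x,y) = (A x + B y, C x + D y). For a bounded operator X on H define ‖X‖_{ber_{∇_t}} = sup_{λ,μ∈Ω} ( t·|⟨X κ̂(λ), κ̂(μ)⟩|^p + (1−t)·|⟨X* κ̂(λ), κ̂(μ)⟩|^p )^{1/p}. Then N_{S,p}(T)^{1/p} ≤ ‖M‖, where M is the 2×2 real matrix with first row ( ‖A‖_{ber_{∇_t}}, (t·‖B‖_ber^p + (1−t)·‖C‖_ber^p)^{1/p} ) and second row ( (t·‖C‖_ber^p + (1−t)·‖B‖_ber^p)^{1/p}, ‖D‖_{ber_{∇_t}} ), and ‖M‖ is its operator norm as a linear map on Euclidean ℝ². -/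

import Mathlib

noncomputable section
open ContinuousLinearMap

variable {H : Type*} [NormedAddCommGroup H] [InnerProductSpace ℂ H] [CompleteSpace H]
variable {Ω : Type*}

/-- Normalization `v̂ = v/‖v‖`. -/
def nvec {E : Type*} [NormedAddCommGroup E] [InnerProductSpace ℂ E] (v : E) : E := ‖v‖⁻¹ • v

/-- Berezin radius with normalized kernels: `ber(X) = sup_{λ} |⟨X κ̂(λ), κ̂(λ)⟩|`. -/
def berN {E Ω' : Type*} [NormedAddCommGroup E] [InnerProductSpace ℂ E] [CompleteSpace E]
    (κ : Ω' → E) (X : E →L[ℂ] E) : ℝ :=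
  ⨆ l : Ω', ‖(inner ℂ (X (nvec (κ l))) (nvec (κ l)) : ℂ)‖

/-- Berezin norm with normalized kernels: `‖X‖_ber = sup_{λ,μ} |⟨X κ̂(λ), κ̂(μ)⟩|`. -/
def berNormN {E Ω' : Type*} [NormedAddCommGroup E] [InnerProductSpace ℂ E] [CompleteSpace E]
    (κ : Ω' → E) (X : E →L[ℂ] E) : ℝ :=
  ⨆ q : Ω' × Ω', ‖(inner ℂ (X (nvec (κ q.1))) (nvec (κ q.2)) : ℂ)‖

/-- `N_{S,p}` with normalized kernels. -/
def NSN {E Ω' : Type*} [NormedAddCommGroup E] [InnerProductSpace ℂ E] [CompleteSpace E]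
    (S : ℝ → ℝ → ℝ) (p : ℝ) (κ : Ω' → E) (T : E →L[ℂ] E) : ℝ :=
  ⨆ q : Ω' × Ω', S (‖(inner ℂ (T (nvec (κ q.1))) (nvec (κ q.2)) : ℂ)‖ ^ p)
    (‖(inner ℂ ((adjoint T) (nvec (κ q.1))) (nvec (κ q.2)) : ℂ)‖ ^ p)

/-- The kernel family on the Hilbert direct sum `H ⊕ H`, indexed by `Ω × Ω`. -/
def prodKernel (κ : Ω → H) : Ω × Ω → WithLp 2 (H × H) :=
  fun q => (WithLp.equiv 2 (H × H)).symm (κ q.1, κ q.2)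

/-- `|X| = (X*X)^{1/2}` via continuous functional calculus. -/
def absOp (X : H →L[ℂ] H) : H →L[ℂ] H := cfc Real.sqrt (adjoint X * X)

/-- `h(|X|)^r` : continuous functional calculus of `|X|` applied to `s ↦ h(s)^r`. -/
def opApply (h : ℝ → ℝ) (r : ℝ) (X : H →L[ℂ] H) : H →L[ℂ] H :=
  cfc (fun s : ℝ => h s ^ r) (absOp X)

/-- The `t`-Berezin norm `‖X‖_{ber_{∇_t}}` with exponent `p` (normalized kernels). -/
def berNablaT {E Θ : Type*} [NormedAddCommGroup E] [InnerProductSpace ℂ E] [CompleteSpace E]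
    (t p : ℝ) (κ : Θ → E) (X : E →L[ℂ] E) : ℝ :=
  ⨆ q : Θ × Θ,
    (t * ‖(inner ℂ (X (nvec (κ q.1))) (nvec (κ q.2)) : ℂ)‖ ^ p
      + (1 - t) * ‖(inner ℂ ((adjoint X) (nvec (κ q.1))) (nvec (κ q.2)) : ℂ)‖ ^ p) ^ (1 / p)

section myhelpers
variable {E : Type*} [NormedAddCommGroup E] [InnerProductSpace ℂ E]

lemma my_norm_nvec {v : E} (hv : v ≠ 0) : ‖nvec v‖ = 1 := by
  have : ‖v‖ ≠ 0 := norm_ne_zero_iff.2 hv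
  simp [nvec, norm_smul, abs_of_nonneg (norm_nonneg v), inv_mul_cancel₀ this]

lemma my_smul_nvec (c : ℝ) {v : E} (hv : v ≠ 0) :
    c • v = (c * ‖v‖) • nvec v := by
  have : ‖v‖ ≠ 0 := norm_ne_zero_iff.2 hv
  rw [nvec, smul_smul, mul_assoc, mul_inv_cancel₀ this, mul_one]

lemma my_inner_real_smul_left (r : ℝ) (x y : E) :
    (inner ℂ ((r : ℝ) • x) y : ℂ) = (r : ℂ) * inner ℂ x y := by
  rw [RCLike.real_smul_eq_coe_smul (K := ℂ), inner_smul_left]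
  simp

lemma my_inner_real_smul_right (r : ℝ) (x y : E) :
    (inner ℂ x ((r : ℝ) • y) : ℂ) = (r : ℂ) * inner ℂ x y := by
  rw [RCLike.real_smul_eq_coe_smul (K := ℂ), inner_smul_right]
  norm_cast

end myhelpers

/-- `gW t p x y = (t x^p + (1-t) y^p)^{1/p}`. -/
def myGW (t p x y : ℝ) : ℝ := (t * x ^ p + (1 - t) * y ^ p) ^ (1 / p)

namespace myGW

variable {t p : ℝ} (ht0 : 0 ≤ t) (ht1 : t ≤ 1) (hp : 1 ≤ p)
include ht0 ht1

lemma base_nonneg {x y : ℝ} (hx : 0 ≤ x) (hy : 0 ≤ y) :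
    0 ≤ t * x ^ p + (1 - t) * y ^ p :=
  add_nonneg (mul_nonneg ht0 (Real.rpow_nonneg hx p))
    (mul_nonneg (by linarith) (Real.rpow_nonneg hy p))

lemma nonneg' {x y : ℝ} (hx : 0 ≤ x) (hy : 0 ≤ y) : 0 ≤ myGW t p x y :=
  Real.rpow_nonneg (base_nonneg ht0 ht1 hx hy) _

include hp

omit ht0 ht1 in
lemma rpow_inv_p {x : ℝ} (hx : 0 ≤ x) : (x ^ p) ^ (1/p) = x := by
  have hp0 : p ≠ 0 := by positivity
  rw [← Real.rpow_mul hx, mul_one_div_cancel hp0, Real.rpow_one]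

lemma mono {x y x' y' : ℝ} (hx : 0 ≤ x) (hy : 0 ≤ y) (hxx : x ≤ x') (hyy : y ≤ y') :
    myGW t p x y ≤ myGW t p x' y' := by
  have hp0 : (0:ℝ) < p := lt_of_lt_of_le one_pos hp
  refine Real.rpow_le_rpow (base_nonneg ht0 ht1 hx hy) ?_ (by positivity)
  exact add_le_add (mul_le_mul_of_nonneg_left (Real.rpow_le_rpow hx hxx hp0.le) ht0)
    (mul_le_mul_of_nonneg_left (Real.rpow_le_rpow hy hyy hp0.le) (by linarith))

lemma smul {c x y : ℝ} (hc : 0 ≤ c) (hx : 0 ≤ x) (hy : 0 ≤ y) :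
    myGW t p (c * x) (c * y) = c * myGW t p x y := by
  have hp0 : p ≠ 0 := by positivity
  unfold myGW
  rw [Real.mul_rpow hc hx, Real.mul_rpow hc hy,
    show t * (c ^ p * x ^ p) + (1 - t) * (c ^ p * y ^ p)
        = c ^ p * (t * x ^ p + (1 - t) * y ^ p) by ring,
    Real.mul_rpow (Real.rpow_nonneg hc p) (base_nonneg ht0 ht1 hx hy),
    ← Real.rpow_mul hc, mul_one_div_cancel hp0, Real.rpow_one]

lemma add {x₁ y₁ x₂ y₂ : ℝ} (hx₁ : 0 ≤ x₁) (hy₁ : 0 ≤ y₁) (hx₂ : 0 ≤ x₂) (hy₂ : 0 ≤ y₂) :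
    myGW t p (x₁ + x₂) (y₁ + y₂) ≤ myGW t p x₁ y₁ + myGW t p x₂ y₂ := by
  have hp0 : p ≠ 0 := by positivity
  have ht1' : (0:ℝ) ≤ 1 - t := by linarith
  have key : ∀ c z : ℝ, 0 ≤ c → 0 ≤ z → (c ^ (1/p) * z) ^ p = c * z ^ p := by
    intro c z hc hz
    rw [Real.mul_rpow (Real.rpow_nonneg hc _) hz, ← Real.rpow_mul hc,
      one_div_mul_cancel hp0, Real.rpow_one]
  have h2 := Real.Lp_add_le_of_nonneg (s := (Finset.univ : Finset (Fin 2)))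
    (f := ![t ^ (1/p) * x₁, (1 - t) ^ (1/p) * y₁])
    (g := ![t ^ (1/p) * x₂, (1 - t) ^ (1/p) * y₂]) hp
    (by intro i _; fin_cases i <;> simp <;> positivity)
    (by intro i _; fin_cases i <;> simp <;> positivity)
  simp only [Fin.sum_univ_two, Matrix.cons_val_zero, Matrix.cons_val_one, Matrix.head_cons] at h2
  rw [show t ^ (1/p) * x₁ + t ^ (1/p) * x₂ = t ^ (1/p) * (x₁ + x₂) by ring,
    show (1-t) ^ (1/p) * y₁ + (1-t) ^ (1/p) * y₂ = (1-t) ^ (1/p) * (y₁ + y₂) by ring,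
    key t (x₁ + x₂) ht0 (by positivity), key t x₁ ht0 hx₁, key t x₂ ht0 hx₂,
    key (1-t) (y₁ + y₂) ht1' (by positivity), key (1-t) y₁ ht1' hy₁,
    key (1-t) y₂ ht1' hy₂] at h2
  exact h2

end myGW

section mainhelpers

variable {H : Type*} [NormedAddCommGroup H] [InnerProductSpace ℂ H] [CompleteSpace H]
variable {Ω : Type*}

lemma prodKernel_norm_pos (κ : Ω → H) (hκ : ∀ l, κ l ≠ 0) (l : Ω × Ω) :
    0 < ‖prodKernel κ l‖ := by
  have h2 : ‖prodKernel κ l‖ ^ 2 = ‖κ l.1‖ ^ 2 + ‖κ l.2‖ ^ 2 := by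
    have := WithLp.prod_norm_sq_eq_of_L2 (prodKernel κ l)
    simpa [prodKernel] using this
  have h1 : (0:ℝ) < ‖κ l.1‖ := norm_pos_iff.2 (hκ l.1)
  nlinarith [norm_nonneg (prodKernel κ l), norm_nonneg (κ l.2)]

lemma prod_nvec_eq (κ : Ω → H) (hκ : ∀ l, κ l ≠ 0) (l : Ω × Ω) :
    nvec (prodKernel κ l)
      = (WithLp.equiv 2 (H × H)).symm
          ((‖κ l.1‖ / ‖prodKernel κ l‖) • nvec (κ l.1),
           (‖κ l.2‖ / ‖prodKernel κ l‖) • nvec (κ l.2)) := by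
  rw [show nvec (prodKernel κ l) = ‖prodKernel κ l‖⁻¹ • prodKernel κ l from rfl]
  rw [show prodKernel κ l = (WithLp.equiv 2 (H × H)).symm (κ l.1, κ l.2) from rfl,
    WithLp.equiv_symm_apply, ← WithLp.toLp_smul, Prod.smul_mk,
    my_smul_nvec _ (hκ l.1), my_smul_nvec _ (hκ l.2)]
  congr 2 <;> rw [div_eq_inv_mul]

lemma inner_T_expand (κ : Ω → H) (hκ : ∀ l, κ l ≠ 0)
    (A B C D : H →L[ℂ] H)
    (T : WithLp 2 (H × H) →L[ℂ] WithLp 2 (H × H))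
    (hT : ∀ x y : H,
      T ((WithLp.equiv 2 (H × H)).symm (x, y))
        = (WithLp.equiv 2 (H × H)).symm (A x + B y, C x + D y))
    (l m : Ω × Ω) :
    (inner ℂ (T (nvec (prodKernel κ l))) (nvec (prodKernel κ m)) : ℂ)
      = ((‖κ l.1‖ / ‖prodKernel κ l‖) * (‖κ m.1‖ / ‖prodKernel κ m‖) : ℝ)
          * inner ℂ (A (nvec (κ l.1))) (nvec (κ m.1))
        + ((‖κ l.2‖ / ‖prodKernel κ l‖) * (‖κ m.1‖ / ‖prodKernel κ m‖) : ℝ)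
          * inner ℂ (B (nvec (κ l.2))) (nvec (κ m.1))
        + ((‖κ l.1‖ / ‖prodKernel κ l‖) * (‖κ m.2‖ / ‖prodKernel κ m‖) : ℝ)
          * inner ℂ (C (nvec (κ l.1))) (nvec (κ m.2))
        + ((‖κ l.2‖ / ‖prodKernel κ l‖) * (‖κ m.2‖ / ‖prodKernel κ m‖) : ℝ)
          * inner ℂ (D (nvec (κ l.2))) (nvec (κ m.2)) := by
  rw [prod_nvec_eq κ hκ l, prod_nvec_eq κ hκ m]
  rw [hT]
  simp only [WithLp.prod_inner_apply, WithLp.equiv_symm_apply, WithLp.ofLp_toLp,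
    inner_add_left, map_smul_of_tower, my_inner_real_smul_left, my_inner_real_smul_right]
  push_cast
  ring

lemma my_matrix_bound (m11 m12 m21 m22 a1 a2 b1 b2 : ℝ)
    (ha : a1 ^ 2 + a2 ^ 2 = 1) (hb : b1 ^ 2 + b2 ^ 2 = 1) :
    a1 * b1 * m11 + a2 * b1 * m12 + a1 * b2 * m21 + a2 * b2 * m22
      ≤ ‖(Matrix.toEuclideanCLM (𝕜 := ℝ) !![m11, m12; m21, m22]
          : EuclideanSpace ℝ (Fin 2) →L[ℝ] EuclideanSpace ℝ (Fin 2))‖ := by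
  set M := (Matrix.toEuclideanCLM (𝕜 := ℝ) !![m11, m12; m21, m22]
      : EuclideanSpace ℝ (Fin 2) →L[ℝ] EuclideanSpace ℝ (Fin 2)) with hM
  set u : EuclideanSpace ℝ (Fin 2) := (WithLp.equiv 2 (Fin 2 → ℝ)).symm ![a1, a2] with hudef
  set v : EuclideanSpace ℝ (Fin 2) := (WithLp.equiv 2 (Fin 2 → ℝ)).symm ![b1, b2] with hvdef
  have hu : ‖u‖ = 1 := by
    rw [EuclideanSpace.norm_eq]
    simp only [hudef, WithLp.equiv_symm_apply, WithLp.ofLp_toLp, Real.norm_eq_abs, sq_abs, Fin.sum_univ_two,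
      Matrix.cons_val_zero, Matrix.cons_val_one, Matrix.head_cons]
    rw [ha, Real.sqrt_one]
  have hv : ‖v‖ = 1 := by
    rw [EuclideanSpace.norm_eq]
    simp only [hvdef, WithLp.equiv_symm_apply, WithLp.ofLp_toLp, Real.norm_eq_abs, sq_abs, Fin.sum_univ_two,
      Matrix.cons_val_zero, Matrix.cons_val_one, Matrix.head_cons]
    rw [hb, Real.sqrt_one]
  have hip : (inner ℝ (M u) v : ℝ)
      = (m11 * a1 + m12 * a2) * b1 + (m21 * a1 + m22 * a2) * b2 := by
    rw [hudef, hM, WithLp.equiv_symm_apply, Matrix.toEuclideanCLM_toLp]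
    simp [PiLp.inner_apply, Fin.sum_univ_two, Matrix.toLin'_apply, Matrix.mulVec,
      dotProduct, hvdef, WithLp.equiv_symm_apply, mul_comm]
  calc a1 * b1 * m11 + a2 * b1 * m12 + a1 * b2 * m21 + a2 * b2 * m22
      = inner ℝ (M u) v := by rw [hip]; ring
    _ ≤ ‖M u‖ * ‖v‖ := real_inner_le_norm _ _
    _ ≤ ‖M‖ * ‖u‖ * ‖v‖ :=
        mul_le_mul_of_nonneg_right (M.le_opNorm u) (norm_nonneg v)
    _ = ‖M‖ := by rw [hu, hv]; ring

lemma my_inner_nvec_le (κ : Ω → H) (hκ : ∀ l, κ l ≠ 0) (X : H →L[ℂ] H) (q : Ω × Ω) :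
    ‖(inner ℂ (X (nvec (κ q.1))) (nvec (κ q.2)) : ℂ)‖ ≤ ‖X‖ := by
  calc ‖(inner ℂ (X (nvec (κ q.1))) (nvec (κ q.2)) : ℂ)‖
      ≤ ‖X (nvec (κ q.1))‖ * ‖nvec (κ q.2)‖ := norm_inner_le_norm _ _
    _ ≤ (‖X‖ * ‖nvec (κ q.1)‖) * ‖nvec (κ q.2)‖ :=
        mul_le_mul_of_nonneg_right (X.le_opNorm _) (norm_nonneg _)
    _ = ‖X‖ := by rw [my_norm_nvec (hκ q.1), my_norm_nvec (hκ q.2)]; ring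

lemma my_berNormN_nonneg (κ : Ω → H) (X : H →L[ℂ] H) : 0 ≤ berNormN κ X :=
  Real.iSup_nonneg fun _ => norm_nonneg _

lemma my_berNormN_le (κ : Ω → H) (hκ : ∀ l, κ l ≠ 0) (X : H →L[ℂ] H) (q : Ω × Ω) :
    ‖(inner ℂ (X (nvec (κ q.1))) (nvec (κ q.2)) : ℂ)‖ ≤ berNormN κ X :=
  le_ciSup ⟨‖X‖, by rintro _ ⟨q', rfl⟩; exact my_inner_nvec_le κ hκ X q'⟩ q

lemma my_berNablaT_le (κ : Ω → H) (hκ : ∀ l, κ l ≠ 0) (X : H →L[ℂ] H)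
    {t p : ℝ} (ht0 : 0 ≤ t) (ht1 : t ≤ 1) (hp : 1 ≤ p) (q : Ω × Ω) :
    myGW t p ‖(inner ℂ (X (nvec (κ q.1))) (nvec (κ q.2)) : ℂ)‖
        ‖(inner ℂ ((ContinuousLinearMap.adjoint X) (nvec (κ q.1))) (nvec (κ q.2)) : ℂ)‖
      ≤ berNablaT t p κ X := by
  have hb : ∀ q' : Ω × Ω,
      (t * ‖(inner ℂ (X (nvec (κ q'.1))) (nvec (κ q'.2)) : ℂ)‖ ^ p
        + (1 - t) * ‖(inner ℂ ((ContinuousLinearMap.adjoint X) (nvec (κ q'.1)))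
            (nvec (κ q'.2)) : ℂ)‖ ^ p) ^ (1 / p)
      ≤ myGW t p ‖X‖ ‖ContinuousLinearMap.adjoint X‖ := fun q' =>
    myGW.mono ht0 ht1 hp (norm_nonneg _) (norm_nonneg _)
      (my_inner_nvec_le κ hκ X q') (my_inner_nvec_le κ hκ _ q')
  exact le_ciSup (f := fun q' : Ω × Ω =>
    (t * ‖(inner ℂ (X (nvec (κ q'.1))) (nvec (κ q'.2)) : ℂ)‖ ^ p
      + (1 - t) * ‖(inner ℂ ((ContinuousLinearMap.adjoint X) (nvec (κ q'.1)))
          (nvec (κ q'.2)) : ℂ)‖ ^ p) ^ (1 / p))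
    ⟨_, by rintro _ ⟨q', rfl⟩; exact hb q'⟩ q

lemma my_norm_add4_le (w1 w2 w3 w4 : ℂ) : ‖w1 + w2 + w3 + w4‖ ≤ ‖w1‖ + ‖w2‖ + ‖w3‖ + ‖w4‖ :=
  (norm_add_le _ _).trans (add_le_add ((norm_add_le _ _).trans
    (add_le_add (norm_add_le _ _) le_rfl)) le_rfl)

lemma my_core {t p : ℝ} (ht0 : 0 ≤ t) (ht1 : t ≤ 1) (hp : 1 ≤ p)
    {X Y c1 c2 c3 c4 x1 x2 x3 x4 y1 y2 y3 y4 M1 M2 M3 M4 : ℝ}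
    (hX0 : 0 ≤ X) (hY0 : 0 ≤ Y)
    (hc1 : 0 ≤ c1) (hc2 : 0 ≤ c2) (hc3 : 0 ≤ c3) (hc4 : 0 ≤ c4)
    (hx1 : 0 ≤ x1) (hx2 : 0 ≤ x2) (hx3 : 0 ≤ x3) (hx4 : 0 ≤ x4)
    (hy1 : 0 ≤ y1) (hy2 : 0 ≤ y2) (hy3 : 0 ≤ y3) (hy4 : 0 ≤ y4)
    (hX : X ≤ c1 * x1 + c2 * x2 + c3 * x3 + c4 * x4)
    (hY : Y ≤ c1 * y1 + c2 * y2 + c3 * y3 + c4 * y4)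
    (h1 : myGW t p x1 y1 ≤ M1) (h2 : myGW t p x2 y2 ≤ M2)
    (h3 : myGW t p x3 y3 ≤ M3) (h4 : myGW t p x4 y4 ≤ M4) :
    myGW t p X Y ≤ c1 * M1 + c2 * M2 + c3 * M3 + c4 * M4 := by
  have n1x : 0 ≤ c1 * x1 := mul_nonneg hc1 hx1
  have n2x : 0 ≤ c2 * x2 := mul_nonneg hc2 hx2
  have n3x : 0 ≤ c3 * x3 := mul_nonneg hc3 hx3
  have n4x : 0 ≤ c4 * x4 := mul_nonneg hc4 hx4
  have n1y : 0 ≤ c1 * y1 := mul_nonneg hc1 hy1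
  have n2y : 0 ≤ c2 * y2 := mul_nonneg hc2 hy2
  have n3y : 0 ≤ c3 * y3 := mul_nonneg hc3 hy3
  have n4y : 0 ≤ c4 * y4 := mul_nonneg hc4 hy4
  calc myGW t p X Y
      ≤ myGW t p (c1 * x1 + c2 * x2 + c3 * x3 + c4 * x4)
          (c1 * y1 + c2 * y2 + c3 * y3 + c4 * y4) :=
        myGW.mono ht0 ht1 hp hX0 hY0 hX hY
    _ ≤ myGW t p (c1 * x1 + c2 * x2 + c3 * x3) (c1 * y1 + c2 * y2 + c3 * y3)
          + myGW t p (c4 * x4) (c4 * y4) :=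
        myGW.add ht0 ht1 hp (by positivity) (by positivity) n4x n4y
    _ ≤ (myGW t p (c1 * x1 + c2 * x2) (c1 * y1 + c2 * y2) + myGW t p (c3 * x3) (c3 * y3))
          + myGW t p (c4 * x4) (c4 * y4) :=
        add_le_add (myGW.add ht0 ht1 hp (by positivity) (by positivity) n3x n3y) le_rfl
    _ ≤ ((myGW t p (c1 * x1) (c1 * y1) + myGW t p (c2 * x2) (c2 * y2))
          + myGW t p (c3 * x3) (c3 * y3)) + myGW t p (c4 * x4) (c4 * y4) :=
        add_le_add (add_le_add
          (myGW.add ht0 ht1 hp n1x n1y n2x n2y) le_rfl) le_rfl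
    _ = c1 * myGW t p x1 y1 + c2 * myGW t p x2 y2 + c3 * myGW t p x3 y3
          + c4 * myGW t p x4 y4 := by
        rw [myGW.smul ht0 ht1 hp hc1 hx1 hy1, myGW.smul ht0 ht1 hp hc2 hx2 hy2,
          myGW.smul ht0 ht1 hp hc3 hx3 hy3, myGW.smul ht0 ht1 hp hc4 hx4 hy4]
    _ ≤ c1 * M1 + c2 * M2 + c3 * M3 + c4 * M4 :=
        add_le_add (add_le_add (add_le_add (mul_le_mul_of_nonneg_left h1 hc1)
          (mul_le_mul_of_nonneg_left h2 hc2)) (mul_le_mul_of_nonneg_left h3 hc3))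
          (mul_le_mul_of_nonneg_left h4 hc4)

set_option maxHeartbeats 1000000 in
lemma my_perpair (κ : Ω → H) (hκ : ∀ l, κ l ≠ 0)
    (A B C D : H →L[ℂ] H)
    (T : WithLp 2 (H × H) →L[ℂ] WithLp 2 (H × H))
    (hT : ∀ x y : H,
      T ((WithLp.equiv 2 (H × H)).symm (x, y))
        = (WithLp.equiv 2 (H × H)).symm (A x + B y, C x + D y))
    {p t : ℝ} (hp : 1 ≤ p) (ht0 : 0 ≤ t) (ht1 : t ≤ 1) (l m : Ω × Ω) :
    myGW t p ‖(inner ℂ (T (nvec (prodKernel κ l))) (nvec (prodKernel κ m)) : ℂ)‖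
        ‖(inner ℂ ((ContinuousLinearMap.adjoint T) (nvec (prodKernel κ l)))
            (nvec (prodKernel κ m)) : ℂ)‖
      ≤ ‖(Matrix.toEuclideanCLM (𝕜 := ℝ)
          (!![berNablaT t p κ A, (t * berNormN κ B ^ p + (1 - t) * berNormN κ C ^ p) ^ (1 / p);
              (t * berNormN κ C ^ p + (1 - t) * berNormN κ B ^ p) ^ (1 / p), berNablaT t p κ D])
          : EuclideanSpace ℝ (Fin 2) →L[ℝ] EuclideanSpace ℝ (Fin 2))‖ := by
  have hNl := prodKernel_norm_pos κ hκ l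
  have hNm := prodKernel_norm_pos κ hκ m
  have h2l : ‖prodKernel κ l‖ ^ 2 = ‖κ l.1‖ ^ 2 + ‖κ l.2‖ ^ 2 := by
    simpa [prodKernel] using WithLp.prod_norm_sq_eq_of_L2 (prodKernel κ l)
  have h2m : ‖prodKernel κ m‖ ^ 2 = ‖κ m.1‖ ^ 2 + ‖κ m.2‖ ^ 2 := by
    simpa [prodKernel] using WithLp.prod_norm_sq_eq_of_L2 (prodKernel κ m)
  have ha : (‖κ l.1‖ / ‖prodKernel κ l‖) ^ 2 + (‖κ l.2‖ / ‖prodKernel κ l‖) ^ 2 = 1 := by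
    rw [div_pow, div_pow, ← add_div, ← h2l, div_self (by positivity)]
  have hb : (‖κ m.1‖ / ‖prodKernel κ m‖) ^ 2 + (‖κ m.2‖ / ‖prodKernel κ m‖) ^ 2 = 1 := by
    rw [div_pow, div_pow, ← add_div, ← h2m, div_self (by positivity)]
  have habs : ∀ (c : ℝ) (w : ℂ), 0 ≤ c → ‖(c : ℂ) * w‖ = c * ‖w‖ := by
    intro c w hc
    rw [norm_mul, Complex.norm_real, Real.norm_eq_abs, abs_of_nonneg hc]
  have hswap : ∀ (X : H →L[ℂ] H) (x y : H),
      ‖(inner ℂ ((ContinuousLinearMap.adjoint X) y) x : ℂ)‖ = ‖(inner ℂ (X x) y : ℂ)‖ := by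
    intro X x y
    rw [ContinuousLinearMap.adjoint_inner_left]
    exact norm_inner_symm _ _
  have hX : ‖(inner ℂ (T (nvec (prodKernel κ l))) (nvec (prodKernel κ m)) : ℂ)‖
      ≤ (‖κ l.1‖ / ‖prodKernel κ l‖) * (‖κ m.1‖ / ‖prodKernel κ m‖)
          * ‖(inner ℂ (A (nvec (κ l.1))) (nvec (κ m.1)) : ℂ)‖
        + (‖κ l.2‖ / ‖prodKernel κ l‖) * (‖κ m.1‖ / ‖prodKernel κ m‖)
          * ‖(inner ℂ (B (nvec (κ l.2))) (nvec (κ m.1)) : ℂ)‖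
        + (‖κ l.1‖ / ‖prodKernel κ l‖) * (‖κ m.2‖ / ‖prodKernel κ m‖)
          * ‖(inner ℂ (C (nvec (κ l.1))) (nvec (κ m.2)) : ℂ)‖
        + (‖κ l.2‖ / ‖prodKernel κ l‖) * (‖κ m.2‖ / ‖prodKernel κ m‖)
          * ‖(inner ℂ (D (nvec (κ l.2))) (nvec (κ m.2)) : ℂ)‖ := by
    rw [inner_T_expand κ hκ A B C D T hT l m]
    refine (my_norm_add4_le _ _ _ _).trans (le_of_eq ?_)
    rw [habs _ _ (by positivity), habs _ _ (by positivity), habs _ _ (by positivity),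
      habs _ _ (by positivity)]
  have hY : ‖(inner ℂ ((ContinuousLinearMap.adjoint T) (nvec (prodKernel κ l)))
        (nvec (prodKernel κ m)) : ℂ)‖
      ≤ (‖κ l.1‖ / ‖prodKernel κ l‖) * (‖κ m.1‖ / ‖prodKernel κ m‖)
          * ‖(inner ℂ ((ContinuousLinearMap.adjoint A) (nvec (κ l.1))) (nvec (κ m.1)) : ℂ)‖
        + (‖κ l.2‖ / ‖prodKernel κ l‖) * (‖κ m.1‖ / ‖prodKernel κ m‖)
          * ‖(inner ℂ ((ContinuousLinearMap.adjoint C) (nvec (κ l.2))) (nvec (κ m.1)) : ℂ)‖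
        + (‖κ l.1‖ / ‖prodKernel κ l‖) * (‖κ m.2‖ / ‖prodKernel κ m‖)
          * ‖(inner ℂ ((ContinuousLinearMap.adjoint B) (nvec (κ l.1))) (nvec (κ m.2)) : ℂ)‖
        + (‖κ l.2‖ / ‖prodKernel κ l‖) * (‖κ m.2‖ / ‖prodKernel κ m‖)
          * ‖(inner ℂ ((ContinuousLinearMap.adjoint D) (nvec (κ l.2))) (nvec (κ m.2)) : ℂ)‖ := by
    have e1 : (inner ℂ ((ContinuousLinearMap.adjoint T) (nvec (prodKernel κ l)))
        (nvec (prodKernel κ m)) : ℂ)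
        = inner ℂ (nvec (prodKernel κ l)) (T (nvec (prodKernel κ m))) :=
      ContinuousLinearMap.adjoint_inner_left T _ _
    calc ‖(inner ℂ ((ContinuousLinearMap.adjoint T) (nvec (prodKernel κ l)))
          (nvec (prodKernel κ m)) : ℂ)‖
        = ‖(inner ℂ (T (nvec (prodKernel κ m))) (nvec (prodKernel κ l)) : ℂ)‖ := by
          rw [e1]; exact norm_inner_symm _ _
      _ ≤ (‖κ m.1‖ / ‖prodKernel κ m‖) * (‖κ l.1‖ / ‖prodKernel κ l‖)
            * ‖(inner ℂ (A (nvec (κ m.1))) (nvec (κ l.1)) : ℂ)‖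
          + (‖κ m.2‖ / ‖prodKernel κ m‖) * (‖κ l.1‖ / ‖prodKernel κ l‖)
            * ‖(inner ℂ (B (nvec (κ m.2))) (nvec (κ l.1)) : ℂ)‖
          + (‖κ m.1‖ / ‖prodKernel κ m‖) * (‖κ l.2‖ / ‖prodKernel κ l‖)
            * ‖(inner ℂ (C (nvec (κ m.1))) (nvec (κ l.2)) : ℂ)‖
          + (‖κ m.2‖ / ‖prodKernel κ m‖) * (‖κ l.2‖ / ‖prodKernel κ l‖)
            * ‖(inner ℂ (D (nvec (κ m.2))) (nvec (κ l.2)) : ℂ)‖ := by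
          rw [inner_T_expand κ hκ A B C D T hT m l]
          refine (my_norm_add4_le _ _ _ _).trans (le_of_eq ?_)
          rw [habs _ _ (by positivity), habs _ _ (by positivity), habs _ _ (by positivity),
            habs _ _ (by positivity)]
      _ = _ := by
          rw [← hswap A (nvec (κ m.1)) (nvec (κ l.1)),
            ← hswap B (nvec (κ m.2)) (nvec (κ l.1)),
            ← hswap C (nvec (κ m.1)) (nvec (κ l.2)),
            ← hswap D (nvec (κ m.2)) (nvec (κ l.2))]
          ring
  have hg1 : myGW t p ‖(inner ℂ (A (nvec (κ l.1))) (nvec (κ m.1)) : ℂ)‖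
      ‖(inner ℂ ((ContinuousLinearMap.adjoint A) (nvec (κ l.1))) (nvec (κ m.1)) : ℂ)‖
      ≤ berNablaT t p κ A := my_berNablaT_le κ hκ A ht0 ht1 hp (l.1, m.1)
  have hg4 : myGW t p ‖(inner ℂ (D (nvec (κ l.2))) (nvec (κ m.2)) : ℂ)‖
      ‖(inner ℂ ((ContinuousLinearMap.adjoint D) (nvec (κ l.2))) (nvec (κ m.2)) : ℂ)‖
      ≤ berNablaT t p κ D := my_berNablaT_le κ hκ D ht0 ht1 hp (l.2, m.2)
  have hg2 : myGW t p ‖(inner ℂ (B (nvec (κ l.2))) (nvec (κ m.1)) : ℂ)‖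
      ‖(inner ℂ ((ContinuousLinearMap.adjoint C) (nvec (κ l.2))) (nvec (κ m.1)) : ℂ)‖
      ≤ (t * berNormN κ B ^ p + (1 - t) * berNormN κ C ^ p) ^ (1 / p) := by
    have hy2 : ‖(inner ℂ ((ContinuousLinearMap.adjoint C) (nvec (κ l.2))) (nvec (κ m.1)) : ℂ)‖
        ≤ berNormN κ C := by
      rw [hswap C (nvec (κ m.1)) (nvec (κ l.2))]
      exact my_berNormN_le κ hκ C (m.1, l.2)
    exact myGW.mono ht0 ht1 hp (norm_nonneg _) (norm_nonneg _)
      (my_berNormN_le κ hκ B (l.2, m.1)) hy2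
  have hg3 : myGW t p ‖(inner ℂ (C (nvec (κ l.1))) (nvec (κ m.2)) : ℂ)‖
      ‖(inner ℂ ((ContinuousLinearMap.adjoint B) (nvec (κ l.1))) (nvec (κ m.2)) : ℂ)‖
      ≤ (t * berNormN κ C ^ p + (1 - t) * berNormN κ B ^ p) ^ (1 / p) := by
    have hy3 : ‖(inner ℂ ((ContinuousLinearMap.adjoint B) (nvec (κ l.1))) (nvec (κ m.2)) : ℂ)‖
        ≤ berNormN κ B := by
      rw [hswap B (nvec (κ m.2)) (nvec (κ l.1))]
      exact my_berNormN_le κ hκ B (m.2, l.1)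
    exact myGW.mono ht0 ht1 hp (norm_nonneg _) (norm_nonneg _)
      (my_berNormN_le κ hκ C (l.1, m.2)) hy3
  exact (my_core ht0 ht1 hp (norm_nonneg _) (norm_nonneg _)
    (by positivity) (by positivity) (by positivity) (by positivity)
    (norm_nonneg _) (norm_nonneg _) (norm_nonneg _) (norm_nonneg _)
    (norm_nonneg _) (norm_nonneg _) (norm_nonneg _) (norm_nonneg _)
    hX hY hg1 hg2 hg3 hg4).trans (my_matrix_bound _ _ _ _ _ _ _ _ ha hb)

end mainhelpers

theorem stmt11 [Nonempty Ω] (κ : Ω → H) (hκ : ∀ l, κ l ≠ 0)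
    (A B C D : H →L[ℂ] H)
    (T : WithLp 2 (H × H) →L[ℂ] WithLp 2 (H × H))
    (hT : ∀ x y : H,
      T ((WithLp.equiv 2 (H × H)).symm (x, y))
        = (WithLp.equiv 2 (H × H)).symm (A x + B y, C x + D y))
    (p : ℝ) (hp : 1 ≤ p)
    (t : ℝ) (ht0 : 0 ≤ t) (ht1 : t ≤ 1)
    (S : ℝ → ℝ → ℝ)
    (hS_nonneg : ∀ a b : ℝ, 0 ≤ a → 0 ≤ b → 0 ≤ S a b)
    (hS_mono₁ : ∀ b ∈ Set.Ici (0 : ℝ), MonotoneOn (fun a => S a b) (Set.Ici 0))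
    (hS_mono₂ : ∀ a ∈ Set.Ici (0 : ℝ), MonotoneOn (fun b => S a b) (Set.Ici 0))
    (hS_le : ∀ a b : ℝ, 0 ≤ a → 0 ≤ b → S a b ≤ t * a + (1 - t) * b) :
    (NSN S p (prodKernel κ) T) ^ (1 / p)
      ≤ ‖(Matrix.toEuclideanCLM (𝕜 := ℝ)
          (!![berNablaT t p κ A, (t * berNormN κ B ^ p + (1 - t) * berNormN κ C ^ p) ^ (1 / p);
              (t * berNormN κ C ^ p + (1 - t) * berNormN κ B ^ p) ^ (1 / p), berNablaT t p κ D])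
          : EuclideanSpace ℝ (Fin 2) →L[ℝ] EuclideanSpace ℝ (Fin 2))‖ := by
  have hp0 : (0:ℝ) < p := lt_of_lt_of_le one_pos hp
  set nM := ‖(Matrix.toEuclideanCLM (𝕜 := ℝ)
          (!![berNablaT t p κ A, (t * berNormN κ B ^ p + (1 - t) * berNormN κ C ^ p) ^ (1 / p);
              (t * berNormN κ C ^ p + (1 - t) * berNormN κ B ^ p) ^ (1 / p), berNablaT t p κ D])
          : EuclideanSpace ℝ (Fin 2) →L[ℝ] EuclideanSpace ℝ (Fin 2))‖ with hnM
  have hnM0 : 0 ≤ nM := hnM ▸ norm_nonneg _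
  have hNSN0 : 0 ≤ NSN S p (prodKernel κ) T :=
    Real.iSup_nonneg fun q => hS_nonneg _ _
      (Real.rpow_nonneg (norm_nonneg _) _) (Real.rpow_nonneg (norm_nonneg _) _)
  have hkey : NSN S p (prodKernel κ) T ≤ nM ^ p := by
    refine ciSup_le fun q => ?_
    set X := ‖(inner ℂ (T (nvec (prodKernel κ q.1))) (nvec (prodKernel κ q.2)) : ℂ)‖ with hXdef
    set Y := ‖(inner ℂ ((ContinuousLinearMap.adjoint T) (nvec (prodKernel κ q.1)))
        (nvec (prodKernel κ q.2)) : ℂ)‖ with hYdef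
    have hgw : myGW t p X Y ≤ nM := my_perpair κ hκ A B C D T hT hp ht0 ht1 q.1 q.2
    have hbase : (0:ℝ) ≤ t * X ^ p + (1 - t) * Y ^ p :=
      myGW.base_nonneg ht0 ht1 (norm_nonneg _) (norm_nonneg _)
    have hpow : (myGW t p X Y) ^ p = t * X ^ p + (1 - t) * Y ^ p := by
      rw [myGW, ← Real.rpow_mul hbase, one_div_mul_cancel hp0.ne', Real.rpow_one]
    calc S (X ^ p) (Y ^ p) ≤ t * X ^ p + (1 - t) * Y ^ p :=
          hS_le _ _ (Real.rpow_nonneg (norm_nonneg _) _) (Real.rpow_nonneg (norm_nonneg _) _)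
      _ = (myGW t p X Y) ^ p := hpow.symm
      _ ≤ nM ^ p := Real.rpow_le_rpow
          (myGW.nonneg' ht0 ht1 (norm_nonneg _) (norm_nonneg _)) hgw hp0.le
  calc (NSN S p (prodKernel κ) T) ^ (1 / p)
      ≤ (nM ^ p) ^ (1 / p) := Real.rpow_le_rpow hNSN0 hkey (by positivity)
    _ = nM := myGW.rpow_inv_p hp hnM0
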